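/- arXiv:1711.05878 — 3 statements merged into one kernel-verified Lean document; each statement's English description precedes it below -/
import Mathlib

section
/- Let M and N be n×n Hermitian positive semidefinite matrices with M - N positive semidefinite. Then 0 ≤ log det(I + M) - log det(I + N) ≤ log det(I + M - N). -/
/-!
Writing `M = N + D` with `D = M - N = T⋆T`, the matrix determinant lemma gives
`det (1 + N + T⋆T) = det (1 + N) * det (1 + T (1 + N)⁻¹ T⋆)`. The second factor lies between
`1` and `det (1 + T T⋆) = det (1 + D)`, because `0 ≤ (1 + N)⁻¹ ≤ 1` and the determinant is
monotone on positive definite matrices in the Loewner order. Taking logarithms gives both bounds.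
-/

open Matrix ComplexOrder

namespace Matrix

open scoped MatrixOrder

variable {𝕜 n : Type*} [RCLike 𝕜] [Fintype n] [DecidableEq n]

theorem IsHermitian.det_cfc {A : Matrix n n 𝕜} (hA : A.IsHermitian) (f : ℝ → ℝ) :
    (cfc f A).det = ∏ i, (f (hA.eigenvalues i) : 𝕜) := by
  rw [hA.cfc_eq]
  simp [IsHermitian.cfc, -Unitary.conjStarAlgAut_apply]

theorem PosSemidef.one_le_det_one_add {E : Matrix n n 𝕜} (hE : E.PosSemidef) :
    1 ≤ (1 + E).det := by
  have h : 1 + E = cfc (fun x : ℝ ↦ 1 + x) E := by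
    rw [cfc_const_add .., cfc_id' ℝ E hE.1.isSelfAdjoint, map_one]
  rw [h, hE.1.det_cfc, ← RCLike.ofReal_prod, ← RCLike.ofReal_one, RCLike.ofReal_le_ofReal]
  exact Finset.one_le_prod fun i _ ↦ le_add_of_nonneg_right (hE.eigenvalues_nonneg i)

theorem PosDef.det_le_det {A B : Matrix n n 𝕜} (hA : A.PosDef) (hAB : A ≤ B) :
    A.det ≤ B.det := by
  obtain ⟨T, hT⟩ := CStarAlgebra.nonneg_iff_eq_star_mul_self.mp (sub_nonneg.mpr hAB)
  have hB : B = A + star T * T := by rw [← hT, add_sub_cancel]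
  rw [hB, det_add_mul _ _ ((isUnit_iff_isUnit_det _).mp hA.isUnit), star_eq_conjTranspose]
  exact le_mul_of_one_le_right hA.det_pos.le
    (hA.posSemidef.inv.mul_mul_conjTranspose_same T).one_le_det_one_add

theorem PosSemidef.inv_one_add_le_one {N : Matrix n n 𝕜} (hN : N.PosSemidef) :
    (1 + N)⁻¹ ≤ 1 := by
  set A := 1 + N with hA_def
  have hA : A.PosDef := PosDef.one.add_posSemidef hN
  have hunit : IsUnit A.det := (isUnit_iff_isUnit_det _).mp hA.isUnit
  -- `A⁻¹ (N + N²) A⁻¹ = A⁻¹ N A A⁻¹ = A⁻¹ (A - 1) = 1 - A⁻¹`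
  have key : 1 - A⁻¹ = (A⁻¹)ᴴ * (N + Nᴴ * N) * A⁻¹ := by
    rw [hA.1.inv.eq, hN.1.eq, ← mul_one_add N N, ← hA_def, Matrix.mul_assoc, Matrix.mul_assoc,
      mul_nonsing_inv _ hunit, Matrix.mul_one, show N = A - 1 by rw [hA_def, add_sub_cancel_left],
      Matrix.mul_sub, nonsing_inv_mul _ hunit, Matrix.mul_one]
  rw [le_iff, key]
  exact (hN.add (posSemidef_conjTranspose_mul_self N)).conjTranspose_mul_mul_same _

theorem PosSemidef.det_one_add_add_le {N D : Matrix n n 𝕜} (hN : N.PosSemidef)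
    (hD : D.PosSemidef) : (1 + (N + D)).det ≤ (1 + N).det * (1 + D).det := by
  have hA : (1 + N).PosDef := PosDef.one.add_posSemidef hN
  obtain ⟨T, rfl⟩ := CStarAlgebra.nonneg_iff_eq_star_mul_self.mp hD.nonneg
  have hle : T * (1 + N)⁻¹ * star T ≤ T * star T := by
    simpa using star_right_conjugate_le_conjugate hN.inv_one_add_le_one T
  rw [← add_assoc, det_add_mul _ _ ((isUnit_iff_isUnit_det _).mp hA.isUnit),
    det_one_add_mul_comm (star T)]
  refine mul_le_mul_of_nonneg_left ?_ hA.det_pos.le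
  rw [star_eq_conjTranspose] at hle ⊢
  exact PosDef.det_le_det (PosDef.one.add_posSemidef
    (hA.posSemidef.inv.mul_mul_conjTranspose_same T)) (add_le_add_right hle 1)

end Matrix

namespace RCLike

variable {K : Type*} [RCLike K]

theorem log_re_le_log_re {z w : K} (hz : 0 < z) (hzw : z ≤ w) :
    Real.log (re z) ≤ Real.log (re w) :=
  Real.log_le_log (pos_iff.mp hz).1 (re_le_re hzw)

theorem log_re_mul {z w : K} (hz : 0 < z) (hw : 0 < w) :
    Real.log (re (z * w)) = Real.log (re z) + Real.log (re w) := by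
  obtain ⟨y, -, rfl⟩ := nonneg_iff_exists_ofReal.mp hw.le
  rw [re_mul_ofReal, ofReal_re, Real.log_mul (pos_iff.mp hz).1.ne' (by simpa using hw.ne')]

end RCLike

theorem stmt1_general {n : ℕ} (M N : Matrix (Fin n) (Fin n) ℂ)
    (hN : N.PosSemidef) (hMN : (M - N).PosSemidef) :
    0 ≤ Real.log (1 + M).det.re - Real.log (1 + N).det.re ∧
      Real.log (1 + M).det.re - Real.log (1 + N).det.re ≤
        Real.log (1 + (M - N)).det.re := by
  have hN1 : (1 + N).PosDef := PosDef.one.add_posSemidef hN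
  have hD1 : (1 + (M - N)).PosDef := PosDef.one.add_posSemidef hMN
  have hmono : (1 + N).det ≤ (1 + M).det :=
    hN1.det_le_det (Matrix.le_iff.mpr (by rwa [add_sub_add_left_eq_sub]))
  have hsub : (1 + M).det ≤ (1 + N).det * (1 + (M - N)).det := by
    simpa only [add_sub_cancel] using hN.det_one_add_add_le hMN
  refine ⟨sub_nonneg.mpr (RCLike.log_re_le_log_re hN1.det_pos hmono), ?_⟩
  have := RCLike.log_re_le_log_re (hN1.det_pos.trans_le hmono) hsub
  rw [RCLike.log_re_mul hN1.det_pos hD1.det_pos] at this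
  simp only [RCLike.re_to_complex] at this
  linarith

/-- For Hermitian PSD M, N with M - N PSD:
    0 ≤ log det(I+M) - log det(I+N) ≤ log det(I + M - N). -/
theorem stmt1 {n : ℕ} (M N : Matrix (Fin n) (Fin n) ℂ)
    (hM : M.PosSemidef) (hN : N.PosSemidef) (hMN : (M - N).PosSemidef) :
    0 ≤ Real.log (1 + M).det.re - Real.log (1 + N).det.re ∧
      Real.log (1 + M).det.re - Real.log (1 + N).det.re ≤
        Real.log (1 + (M - N)).det.re :=
  stmt1_general M N hN hMN
end

section
/- Let H be an n×n symmetric positive semidefinite matrix with eigenvalues λ₁ ≥ … ≥ λ_n ≥ 0 and let T be an ℓ×ℓ symmetric positive semidefinite matrix (ℓ ≤ n) with eigenvalues λ̃₁ ≥ … ≥ λ̃_ℓ ≥ 0 satisfying the interlacing property λ_i ≥ λ̃_i ≥ 0 for i = 1,…,ℓ. Then 0 ≤ tr(H(I+H)^{-1}) - tr(T(I+T)^{-1}) ≤ tr(H) - tr(T). -/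
open Matrix

section Aux

lemma trace_conj_key {m : ℕ} (A U : Matrix (Fin m) (Fin m) ℝ) (lam : Fin m → ℝ)
    (hU : Uᵀ * U = 1) (hU' : U * Uᵀ = 1) (hdec : A = U * Matrix.diagonal lam * Uᵀ)
    (hnn : ∀ i, 0 ≤ lam i) :
    (A * (1 + A)⁻¹).trace = ∑ i, lam i / (1 + lam i) ∧ A.trace = ∑ i, lam i := by
  have hpos : ∀ i, (0:ℝ) < 1 + lam i := fun i => by linarith [hnn i]
  have hconj : ∀ v w : Fin m → ℝ,
      (U * Matrix.diagonal v * Uᵀ) * (U * Matrix.diagonal w * Uᵀ)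
        = U * Matrix.diagonal (fun i => v i * w i) * Uᵀ := by
    intro v w
    rw [show (U * Matrix.diagonal v * Uᵀ) * (U * Matrix.diagonal w * Uᵀ)
        = U * Matrix.diagonal v * (Uᵀ * U) * (Matrix.diagonal w * Uᵀ) by
      simp only [Matrix.mul_assoc], hU]
    simp only [Matrix.mul_one, Matrix.mul_assoc]
    rw [← Matrix.mul_assoc (Matrix.diagonal v), Matrix.diagonal_mul_diagonal]
  have htr : ∀ v : Fin m → ℝ, (U * Matrix.diagonal v * Uᵀ).trace = ∑ i, v i := by
    intro v
    rw [Matrix.trace_mul_comm, ← Matrix.mul_assoc, hU, Matrix.one_mul,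
      Matrix.trace_diagonal]
  have h1 : (1 : Matrix (Fin m) (Fin m) ℝ) + A
      = U * Matrix.diagonal (fun i => 1 + lam i) * Uᵀ := by
    have : Matrix.diagonal (fun i : Fin m => 1 + lam i)
        = 1 + Matrix.diagonal lam := by
      rw [← Matrix.diagonal_one, ← Matrix.diagonal_add]
    rw [this, Matrix.mul_add, Matrix.add_mul, Matrix.mul_one, hU', hdec]
  have hinv : ((1 : Matrix (Fin m) (Fin m) ℝ) + A)⁻¹
      = U * Matrix.diagonal (fun i => (1 + lam i)⁻¹) * Uᵀ := by
    apply Matrix.inv_eq_right_inv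
    rw [h1, hconj]
    have : (fun i => (1 + lam i) * (1 + lam i)⁻¹) = fun _ : Fin m => (1:ℝ) := by
      funext i; exact mul_inv_cancel₀ (hpos i).ne'
    rw [this, Matrix.diagonal_one, Matrix.mul_one, hU']
  constructor
  · rw [hinv, hdec, hconj, htr]
    exact Finset.sum_congr rfl fun i _ => (div_eq_mul_inv _ _).symm
  · rw [hdec, htr]

lemma sum_mono_key {n l : ℕ} (hln : l ≤ n) (a : Fin n → ℝ) (b : Fin l → ℝ)
    (ha : ∀ i, 0 ≤ a i) (hb : ∀ i, 0 ≤ b i)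
    (hab : ∀ i, b i ≤ a (Fin.castLE hln i))
    (φ : ℝ → ℝ) (hφ0 : ∀ x, 0 ≤ x → 0 ≤ φ x)
    (hφmono : ∀ x y, 0 ≤ x → x ≤ y → φ x ≤ φ y) :
    ∑ i, φ (b i) ≤ ∑ i, φ (a i) := by
  calc ∑ i, φ (b i) ≤ ∑ i : Fin l, φ (a (Fin.castLE hln i)) :=
        Finset.sum_le_sum fun i _ => hφmono _ _ (hb i) (hab i)
    _ = ∑ j ∈ Finset.univ.map (Fin.castLEEmb hln), φ (a j) := by
        rw [Finset.sum_map]; rfl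
    _ ≤ ∑ i, φ (a i) :=
        Finset.sum_le_sum_of_subset_of_nonneg (Finset.subset_univ _)
          (fun j _ _ => hφ0 _ (ha j))

end Aux

/-- If the eigenvalues of T interlace below those of H (λᵢ ≥ λ̃ᵢ ≥ 0), then
    0 ≤ tr(H(I+H)⁻¹) - tr(T(I+T)⁻¹) ≤ tr(H) - tr(T). -/
theorem stmt7 {n l : ℕ} (hln : l ≤ n)
    (H UH : Matrix (Fin n) (Fin n) ℝ) (lamH : Fin n → ℝ)
    (T UT : Matrix (Fin l) (Fin l) ℝ) (lamT : Fin l → ℝ)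
    (hH : H.PosSemidef) (hT : T.PosSemidef)
    (hUH : UHᵀ * UH = 1) (hUH' : UH * UHᵀ = 1)
    (hUT : UTᵀ * UT = 1) (hUT' : UT * UTᵀ = 1)
    (hdecH : H = UH * Matrix.diagonal lamH * UHᵀ)
    (hdecT : T = UT * Matrix.diagonal lamT * UTᵀ)
    (hordH : ∀ i j : Fin n, i ≤ j → lamH j ≤ lamH i)
    (hordT : ∀ i j : Fin l, i ≤ j → lamT j ≤ lamT i)
    (hTnn : ∀ i, 0 ≤ lamT i)
    (hinterlace : ∀ i : Fin l, lamT i ≤ lamH (Fin.castLE hln i)) :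
    0 ≤ (H * (1 + H)⁻¹).trace - (T * (1 + T)⁻¹).trace ∧
      (H * (1 + H)⁻¹).trace - (T * (1 + T)⁻¹).trace ≤ H.trace - T.trace := by
  have hHnn : ∀ i, 0 ≤ lamH i := by
    have hD : Matrix.diagonal lamH = UHᵀ * H * UH := by
      rw [hdecH]
      rw [show UHᵀ * (UH * Matrix.diagonal lamH * UHᵀ) * UH
          = (UHᵀ * UH) * Matrix.diagonal lamH * (UHᵀ * UH) by
        simp only [Matrix.mul_assoc], hUH]
      simp
    have hpsd : (Matrix.diagonal lamH).PosSemidef := by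
      rw [hD]
      have := hH.conjTranspose_mul_mul_same UH
      simpa using this
    exact fun i => by simpa using Matrix.posSemidef_diagonal_iff.mp hpsd i
  obtain ⟨hH1, hH2⟩ := trace_conj_key H UH lamH hUH hUH' hdecH hHnn
  obtain ⟨hT1, hT2⟩ := trace_conj_key T UT lamT hUT hUT' hdecT hTnn
  rw [hH1, hH2, hT1, hT2]
  constructor
  · rw [sub_nonneg]
    refine sum_mono_key hln lamH lamT hHnn hTnn hinterlace
      (fun x => x / (1 + x)) ?_ ?_
    · intro x hx
      positivity
    · intro x y hx hxy
      rw [div_le_div_iff₀ (by linarith) (by linarith)]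
      nlinarith
  · rw [sub_le_sub_iff]
    rw [show (∑ i, lamH i / (1 + lamH i)) + ∑ i, lamT i
        = (∑ i, lamH i / (1 + lamH i)) + ∑ i, lamT i from rfl]
    have key : ∑ i, (lamT i - lamT i / (1 + lamT i))
        ≤ ∑ i, (lamH i - lamH i / (1 + lamH i)) := by
      refine sum_mono_key hln lamH lamT hHnn hTnn hinterlace
        (fun x => x - x / (1 + x)) ?_ ?_
      · intro x hx
        have h1 : (0:ℝ) < 1 + x := by linarith
        rw [sub_nonneg, div_le_iff₀ h1]
        nlinarith
      · intro x y hx hxy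
        have h1 : (0:ℝ) < 1 + x := by linarith
        have h2 : (0:ℝ) < 1 + y := by linarith
        rw [sub_le_sub_iff]
        nlinarith [div_mul_cancel₀ x h1.ne', div_mul_cancel₀ y h2.ne',
          div_nonneg hx h1.le, div_nonneg (le_trans hx hxy) h2.le,
          mul_le_mul_of_nonneg_right hxy (div_nonneg hx h1.le)]
    simp only [Finset.sum_sub_distrib] at key
    linarith
end

section
/- Let F ∈ ℝ^{m×n} have singular value decomposition F = F_k + F_{k⊥}, where F_k is the best rank-k truncation with singular values σ₁ ≥ … ≥ σ_k and F_{k⊥} contains the remaining singular values (collected in the diagonal matrix Σ₂). Let W ∈ ℝ^{m×m} be diagonal with entries in [0,1]. Then 0 ≤ log det(I + FᵀWF) - log det(I + F_kᵀWF_k) ≤ log det(I + Σ₂²). -/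
/-!
Put `S = W^{1/2}`, `A = S F_k` and `B = S F_{k⊥}`. Since `F_k F_{k⊥}ᵀ = 0` the cross terms of
`(A + B)(A + B)ᵀ` vanish, and the Weinstein–Aronszajn identity together with the matrix
determinant lemma give `det(I + FᵀWF) = det(I + F_kᵀWF_k) · det(I + X)` with
`X = Bᵀ(I + AAᵀ)⁻¹B`. From `0 ≤ (I + AAᵀ)⁻¹ ≤ I` and `W ≤ I` we get
`0 ≤ X ≤ F_{k⊥}ᵀF_{k⊥} = VΣ₂²Vᵀ` in the Loewner order, and monotonicity of the determinant yields
`1 ≤ det(I + X) ≤ det(I + Σ₂²)`.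
-/

open Matrix
open scoped MatrixOrder

namespace Matrix

variable {p q r : Type*}

lemma PosSemidef.one_le_det_one_add_s13 [Fintype p] [DecidableEq p] {P : Matrix p p ℝ}
    (hP : P.PosSemidef) : 1 ≤ (1 + P).det := by
  have hdet : (1 + P).det = ∏ i, (1 + hP.isHermitian.eigenvalues i) := by
    conv_lhs =>
      rw [hP.isHermitian.spectral_theorem, ← map_one (Unitary.conjStarAlgAut ℝ _ _), ← map_add]
    rw [Unitary.conjStarAlgAut_apply, det_mul_right_comm,
      Unitary.mul_star_self_of_mem (SetLike.coe_mem _), one_mul, ← diagonal_one, diagonal_add,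
      det_diagonal]
    rfl
  rw [hdet]
  exact Finset.one_le_prod fun i _ => le_add_of_nonneg_right (hP.eigenvalues_nonneg i)

lemma PosDef.det_le_det_of_le [Fintype p] [DecidableEq p] {M N : Matrix p p ℝ} (hM : M.PosDef)
    (hMN : M ≤ N) : M.det ≤ N.det := by
  obtain ⟨R, hR⟩ : ∃ R : Matrix p p ℝ, N - M = Rᴴ * R :=
    ⟨CFC.sqrt (N - M), by
      rw [(CFC.sqrt_nonneg _).posSemidef.isHermitian.eq,
        CFC.sqrt_mul_sqrt_self _ (sub_nonneg.mpr hMN)]⟩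
  rw [← add_sub_cancel M N, hR, det_add_mul _ _ hM.det_pos.ne'.isUnit]
  exact le_mul_of_one_le_right hM.det_pos.le
    (hM.inv.posSemidef.mul_mul_conjTranspose_same R).one_le_det_one_add_s13

lemma inv_one_add_le_one [Fintype p] [DecidableEq p] {P : Matrix p p ℝ} (hP : 0 ≤ P) :
    (1 + P)⁻¹ ≤ 1 := by
  have hpd : (1 + P).PosDef := PosDef.one.add_posSemidef hP.posSemidef
  have hunit : IsUnit (1 + P).det := hpd.det_pos.ne'.isUnit
  set N := (1 + P)⁻¹
  have hsub : 1 - N = star N * (P + star P * P) * N := by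
    rw [(IsSelfAdjoint.of_nonneg hP).star_eq, star_eq_conjTranspose, hpd.isHermitian.inv.eq]
    calc 1 - N = N * (1 + P) - N := by rw [nonsing_inv_mul _ hunit]
      _ = N * P * ((1 + P) * N) := by rw [mul_nonsing_inv _ hunit]; noncomm_ring
      _ = N * (P + P * P) * N := by noncomm_ring
  rw [← sub_nonneg, hsub]
  exact star_left_conjugate_nonneg (add_nonneg hP (star_mul_self_nonneg P)) N

lemma transpose_mul_mul_le_of_le [Fintype p] [Fintype q] {M N : Matrix p p ℝ} (hMN : M ≤ N)
    (B : Matrix p q ℝ) : Bᵀ * M * B ≤ Bᵀ * N * B := by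
  rw [le_iff] at hMN ⊢
  simpa [Matrix.mul_sub, Matrix.sub_mul] using hMN.conjTranspose_mul_mul_same B

lemma diagonal_le_one [DecidableEq p] {w : p → ℝ} (hw : ∀ i, w i ≤ 1) : diagonal w ≤ 1 := by
  rw [le_iff, ← diagonal_one, diagonal_sub]
  exact posSemidef_diagonal_iff.mpr fun i => sub_nonneg.mpr (hw i)

lemma transpose_mul_self_diagonal_sqrt_mul [Fintype p] [DecidableEq p] {w : p → ℝ}
    (hw : ∀ i, 0 ≤ w i) (F : Matrix p q ℝ) :
    (diagonal (fun i => √(w i)) * F)ᵀ * (diagonal (fun i => √(w i)) * F) =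
      Fᵀ * diagonal w * F := by
  rw [transpose_mul, diagonal_transpose, Matrix.mul_assoc, ← Matrix.mul_assoc _ _ F,
    diagonal_mul_diagonal, ← Matrix.mul_assoc]
  simp only [Real.mul_self_sqrt (hw _)]

lemma det_one_add_transpose_mul_add_of_mul_transpose_eq_zero [Fintype p] [DecidableEq p]
    [Fintype q] [DecidableEq q] {A B : Matrix p q ℝ} (hAB : A * Bᵀ = 0) :
    (1 + (A + B)ᵀ * (A + B)).det = (1 + Aᵀ * A).det * (1 + Bᵀ * (1 + A * Aᵀ)⁻¹ * B).det := by
  have hBA : B * Aᵀ = 0 := by simpa using congrArg transpose hAB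
  have hpd : (1 + A * Aᵀ).PosDef :=
    PosDef.one.add_posSemidef (posSemidef_self_mul_conjTranspose A)
  calc (1 + (A + B)ᵀ * (A + B)).det = (1 + (A + B) * (A + B)ᵀ).det := det_one_add_mul_comm _ _
    _ = (1 + A * Aᵀ + B * Bᵀ).det := by
      rw [transpose_add, Matrix.add_mul, Matrix.mul_add, Matrix.mul_add, hAB, hBA, add_zero,
        zero_add, add_assoc]
    _ = _ := by rw [det_add_mul _ _ hpd.det_pos.ne'.isUnit, det_one_add_mul_comm A]

lemma det_one_add_mul_mul_transpose [Fintype q] [DecidableEq q] [Fintype r] [DecidableEq r]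
    {V : Matrix q r ℝ} (hV : Vᵀ * V = 1) (D : Matrix r r ℝ) :
    (1 + V * D * Vᵀ).det = (1 + D).det := by
  rw [Matrix.mul_assoc, det_one_add_mul_comm, Matrix.mul_assoc, hV, Matrix.mul_one]

end Matrix

theorem stmt13_general {m n : ℕ} (F Fk Fperp : Matrix (Fin m) (Fin n) ℝ)
    (w : Fin m → ℝ) (hw : ∀ i, 0 ≤ w i) (hw1 : ∀ i, w i ≤ 1)
    (hsplit : F = Fk + Fperp)
    (horth1 : Fk * Fperpᵀ = 0)
    (sigma2 : Fin n → ℝ) (V : Matrix (Fin n) (Fin n) ℝ)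
    (hV : Vᵀ * V = 1)
    (hSigma2 : Fperpᵀ * Fperp = V * Matrix.diagonal (fun i => sigma2 i ^ 2) * Vᵀ) :
    0 ≤ Real.log (1 + Fᵀ * Matrix.diagonal w * F).det -
          Real.log (1 + Fkᵀ * Matrix.diagonal w * Fk).det ∧
      Real.log (1 + Fᵀ * Matrix.diagonal w * F).det -
          Real.log (1 + Fkᵀ * Matrix.diagonal w * Fk).det ≤
        Real.log (1 + Matrix.diagonal (fun i => sigma2 i ^ 2)).det := by
  set S := diagonal fun i => √(w i)
  set X := (S * Fperp)ᵀ * (1 + (S * Fk) * (S * Fk)ᵀ)⁻¹ * (S * Fperp)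
  have hdet : (1 + Fᵀ * diagonal w * F).det = (1 + Fkᵀ * diagonal w * Fk).det * (1 + X).det := by
    rw [← transpose_mul_self_diagonal_sqrt_mul hw, ← transpose_mul_self_diagonal_sqrt_mul hw,
      hsplit, Matrix.mul_add]
    refine det_one_add_transpose_mul_add_of_mul_transpose_eq_zero ?_
    rw [transpose_mul, diagonal_transpose, Matrix.mul_assoc, ← Matrix.mul_assoc Fk, horth1,
      Matrix.zero_mul, Matrix.mul_zero]
  have hA : 0 ≤ (S * Fk) * (S * Fk)ᵀ := (posSemidef_self_mul_conjTranspose _).nonneg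
  have hX0 : 0 ≤ X :=
    ((PosDef.one.add_posSemidef hA.posSemidef).inv.posSemidef.conjTranspose_mul_mul_same
      (S * Fperp)).nonneg
  have hX : X ≤ Fperpᵀ * Fperp :=
    calc X ≤ (S * Fperp)ᵀ * 1 * (S * Fperp) :=
          transpose_mul_mul_le_of_le (inv_one_add_le_one hA) _
      _ = Fperpᵀ * diagonal w * Fperp := by
          rw [Matrix.mul_one, transpose_mul_self_diagonal_sqrt_mul hw]
      _ ≤ Fperpᵀ * 1 * Fperp := transpose_mul_mul_le_of_le (diagonal_le_one hw1) _
      _ = Fperpᵀ * Fperp := by rw [Matrix.mul_one]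
  have hlow : 1 ≤ (1 + X).det := hX0.posSemidef.one_le_det_one_add_s13
  have hup : (1 + X).det ≤ (1 + diagonal fun i => sigma2 i ^ 2).det := by
    rw [← det_one_add_mul_mul_transpose hV (diagonal _), ← hSigma2]
    exact (PosDef.one.add_posSemidef hX0.posSemidef).det_le_det_of_le (add_le_add_right hX 1)
  have hpos : 0 < (1 + Fkᵀ * diagonal w * Fk).det := by
    rw [← transpose_mul_self_diagonal_sqrt_mul hw]
    exact (PosDef.one.add_posSemidef (posSemidef_conjTranspose_mul_self _)).det_pos
  rw [hdet, Real.log_mul hpos.ne' (by linarith), add_sub_cancel_left]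
  exact ⟨Real.log_nonneg hlow, Real.log_le_log (by linarith) hup⟩

/-- Frozen low-rank approximation error bound:
    0 ≤ log det(I + FᵀWF) - log det(I + FₖᵀWFₖ) ≤ log det(I + Σ₂²). -/
theorem stmt13 {m n : ℕ} (F Fk Fperp : Matrix (Fin m) (Fin n) ℝ)
    (w : Fin m → ℝ) (hw : ∀ i, 0 ≤ w i) (hw1 : ∀ i, w i ≤ 1)
    (hsplit : F = Fk + Fperp)
    (horth1 : Fk * Fperpᵀ = 0) (horth2 : Fperp * Fkᵀ = 0)
    (horth3 : Fkᵀ * Fperp = 0) (horth4 : Fperpᵀ * Fk = 0)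
    (sigma2 : Fin n → ℝ) (V : Matrix (Fin n) (Fin n) ℝ)
    (hV : Vᵀ * V = 1) (hV' : V * Vᵀ = 1)
    (hSigma2 : Fperpᵀ * Fperp = V * Matrix.diagonal (fun i => sigma2 i ^ 2) * Vᵀ) :
    0 ≤ Real.log (1 + Fᵀ * Matrix.diagonal w * F).det -
          Real.log (1 + Fkᵀ * Matrix.diagonal w * Fk).det ∧
      Real.log (1 + Fᵀ * Matrix.diagonal w * F).det -
          Real.log (1 + Fkᵀ * Matrix.diagonal w * Fk).det ≤
        Real.log (1 + Matrix.diagonal (fun i => sigma2 i ^ 2)).det :=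
  stmt13_general F Fk Fperp w hw hw1 hsplit horth1 sigma2 V hV hSigma2
end
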